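/- arXiv:2203.12689 — 2 statements merged into one kernel-verified Lean document; each statement's English description precedes it below -/
import Mathlib

section
/- Let Y be an integrable random variable and α ∈ (0,1). Then the conditional value-at-risk CVaR_α(Y) := inf_{τ∈ℝ} (τ + (1/α)·E[max(Y-τ, 0)]) is attained at τ = v_α(Y) := inf{z : P(Y ≤ z) ≥ 1-α}, i.e., CVaR_α(Y) = v_α(Y) + (1/α)·E[max(Y - v_α(Y), 0)]. -/
/-!
Only the law `μ` of `Y` matters. For every `τ`, pointwise
`(x - v)⁺ ≤ (x - τ)⁺ + (τ - v) 1{x > v}` and `(x - v)⁺ + (v - τ) 1{x ≥ v} ≤ (x - τ)⁺`,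
so `μ(v, ∞)` and `μ[v, ∞)` bound the slopes of `τ ↦ ∫ (x - τ)⁺ dμ` at `v`, and
`τ ↦ τ + α⁻¹ ∫ (x - τ)⁺ dμ` is minimal at every `v` with `μ(v, ∞) ≤ α ≤ μ[v, ∞)`.
The lower `(1 - α)`-quantile `v` is such a point: `F v ≥ 1 - α` by right continuity of the
distribution function `F`, and `F(v⁻) ≤ 1 - α` because `F t < 1 - α` for all `t < v`.
-/

open MeasureTheory Set Filter Topology

noncomputable def phi (γ z : ℝ) : ℝ := if γ = 0 then Real.exp (-z) else (1 + γ * z) ^ (-1/γ)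

def Jgamma (γ : ℝ) : Set ℝ := if γ < 0 then Set.Ico 0 (-1/γ) else Set.Ici 0

noncomputable def Ftheta (k m : ℕ) (γ s g z : ℝ) : ℝ :=
  if z < s then 0
  else if γ < 0 ∧ s - g/γ ≤ z then 1
  else 1 - ((k : ℝ)/m) * phi γ ((z - s)/g)

def Itheta (γ s g : ℝ) : Set ℝ := if γ < 0 then Set.Ico s (s - g/γ) else Set.Ici s

open ProbabilityTheory

section Quantile

variable {f : ℝ → ℝ} {p : ℝ}

theorem Monotone.leftLim_sInf_le (hf : Monotone f) (hbdd : BddBelow {z | p ≤ f z}) :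
    Function.leftLim f (sInf {z | p ≤ f z}) ≤ p := by
  rw [hf.leftLim_eq_sSup]
  refine csSup_le (nonempty_Iio.image f) ?_
  rintro _ ⟨t, ht, rfl⟩
  by_contra! hpt
  exact (not_le.2 (mem_Iio.1 ht)) (csInf_le hbdd hpt.le)

theorem StieltjesFunction.le_apply_sInf (f : StieltjesFunction ℝ)
    (hne : {z | p ≤ f z}.Nonempty) : p ≤ f (sInf {z | p ≤ f z}) := by
  have hright : ∀ᶠ t in 𝓝[>] sInf {z | p ≤ f z}, p ≤ f t := by
    filter_upwards [self_mem_nhdsWithin] with t ht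
    obtain ⟨z, hz, hzt⟩ := exists_lt_of_csInf_lt hne ht
    exact hz.trans (f.mono hzt.le)
  exact ge_of_tendsto ((f.right_continuous _).mono Ioi_subset_Ici_self) hright

variable (μ : Measure ℝ)

noncomputable def lowerQuantile (p : ℝ) : ℝ := sInf {z | p ≤ cdf μ z}

theorem nonempty_setOf_le_cdf (hp : p < 1) : {z | p ≤ cdf μ z}.Nonempty :=
  ((tendsto_cdf_atTop μ).eventually_const_le hp).exists

theorem bddBelow_setOf_le_cdf (hp : 0 < p) : BddBelow {z | p ≤ cdf μ z} := by
  obtain ⟨a, ha⟩ := eventually_atBot.1 ((tendsto_cdf_atBot μ).eventually_lt_const hp)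
  refine ⟨a, fun z hz => ?_⟩
  by_contra! hza
  exact (ha z hza.le).not_ge hz

theorem measureReal_Ioi_lowerQuantile_le [IsProbabilityMeasure μ] (hp : p < 1) :
    μ.real (Ioi (lowerQuantile μ p)) ≤ 1 - p := by
  have hcdf : p ≤ cdf μ (lowerQuantile μ p) :=
    (cdf μ).le_apply_sInf (nonempty_setOf_le_cdf μ hp)
  rw [← compl_Iic, measureReal_compl measurableSet_Iic, probReal_univ, ← cdf_eq_real]
  linarith

theorem le_measureReal_Ici_lowerQuantile [IsProbabilityMeasure μ] (hp : 0 < p) :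
    1 - p ≤ μ.real (Ici (lowerQuantile μ p)) := by
  set q := lowerQuantile μ p
  have hleft : Function.leftLim (cdf μ) q ≤ p :=
    (monotone_cdf μ).leftLim_sInf_le (bddBelow_setOf_le_cdf μ hp)
  have hIio : μ.real (Iio q) = Function.leftLim (cdf μ) q := by
    have h := (cdf μ).measure_Iio (tendsto_cdf_atBot μ) q
    rw [measure_cdf, sub_zero] at h
    rw [measureReal_def, h, ENNReal.toReal_ofReal
      ((cdf_nonneg μ (q - 1)).trans ((cdf μ).mono.le_leftLim (sub_one_lt q)))]
  rw [← compl_Iio, measureReal_compl measurableSet_Iio, probReal_univ, hIio]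
  linarith

end Quantile

section ExpectedShortfall

variable {μ : Measure ℝ} [IsFiniteMeasure μ] {v τ : ℝ}

theorem integrable_max_sub_const (hμ : Integrable id μ) (c : ℝ) :
    Integrable (fun x => max (x - c) 0) μ :=
  (hμ.sub (integrable_const c)).pos_part

theorem integral_max_sub_le_add_measureReal_Ioi (hμ : Integrable id μ) :
    ∫ x, max (x - v) 0 ∂μ ≤ ∫ x, max (x - τ) 0 ∂μ + (τ - v) * μ.real (Ioi v) := by
  have hpointwise : (fun x => max (x - v) 0)
      ≤ fun x => max (x - τ) 0 + (Ioi v).indicator (fun _ => τ - v) x := by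
    intro x
    by_cases hx : v < x
    · simp only [indicator_of_mem (mem_Ioi.2 hx)]
      have := le_max_left (x - τ) 0
      rw [max_eq_left (by linarith)]
      linarith
    · simp only [indicator_of_notMem (show x ∉ Ioi v from hx)]
      rw [max_eq_right (by linarith [not_lt.1 hx])]
      simp
  have hind : Integrable ((Ioi v).indicator fun _ => τ - v) μ :=
    (integrable_const _).indicator measurableSet_Ioi
  calc ∫ x, max (x - v) 0 ∂μ
      ≤ ∫ x, (max (x - τ) 0 + (Ioi v).indicator (fun _ => τ - v) x) ∂μ :=
        integral_mono (integrable_max_sub_const hμ v)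
          ((integrable_max_sub_const hμ τ).add hind) hpointwise
    _ = ∫ x, max (x - τ) 0 ∂μ + (τ - v) * μ.real (Ioi v) := by
        rw [integral_add (integrable_max_sub_const hμ τ) hind,
          integral_indicator_const _ measurableSet_Ioi, smul_eq_mul, mul_comm]

theorem integral_max_sub_add_measureReal_Ici_le (hμ : Integrable id μ) :
    ∫ x, max (x - v) 0 ∂μ + (v - τ) * μ.real (Ici v) ≤ ∫ x, max (x - τ) 0 ∂μ := by
  have hpointwise : (fun x => max (x - v) 0 + (Ici v).indicator (fun _ => v - τ) x)
      ≤ fun x => max (x - τ) 0 := by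
    intro x
    by_cases hx : v ≤ x
    · simp only [indicator_of_mem (mem_Ici.2 hx)]
      have := le_max_left (x - τ) 0
      rw [max_eq_left (by linarith)]
      linarith
    · simp only [indicator_of_notMem (show x ∉ Ici v from hx)]
      rw [max_eq_right (by linarith [not_le.1 hx])]
      simp
  have hind : Integrable ((Ici v).indicator fun _ => v - τ) μ :=
    (integrable_const _).indicator measurableSet_Ici
  calc ∫ x, max (x - v) 0 ∂μ + (v - τ) * μ.real (Ici v)
      = ∫ x, (max (x - v) 0 + (Ici v).indicator (fun _ => v - τ) x) ∂μ := by
        rw [integral_add (integrable_max_sub_const hμ v) hind,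
          integral_indicator_const _ measurableSet_Ici, smul_eq_mul, mul_comm]
    _ ≤ ∫ x, max (x - τ) 0 ∂μ :=
        integral_mono ((integrable_max_sub_const hμ v).add hind)
          (integrable_max_sub_const hμ τ) hpointwise

theorem integral_max_sub_le_add_of_measureReal (hμ : Integrable id μ) {α : ℝ}
    (hIoi : μ.real (Ioi v) ≤ α) (hIci : α ≤ μ.real (Ici v)) (τ : ℝ) :
    ∫ x, max (x - v) 0 ∂μ ≤ ∫ x, max (x - τ) 0 ∂μ + α * (τ - v) := by
  rcases le_total v τ with hvτ | hτv
  · calc ∫ x, max (x - v) 0 ∂μ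
        ≤ ∫ x, max (x - τ) 0 ∂μ + (τ - v) * μ.real (Ioi v) :=
          integral_max_sub_le_add_measureReal_Ioi hμ
      _ ≤ ∫ x, max (x - τ) 0 ∂μ + α * (τ - v) := by
          rw [mul_comm α]
          gcongr
  · have hshift : (v - τ) * α ≤ (v - τ) * μ.real (Ici v) := by gcongr
    linarith [integral_max_sub_add_measureReal_Ici_le (v := v) (τ := τ) hμ]

theorem ciInf_add_integral_max_sub_eq (hμ : Integrable id μ) {α : ℝ} (hα : 0 < α)
    (hIoi : μ.real (Ioi v) ≤ α) (hIci : α ≤ μ.real (Ici v)) :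
    ⨅ τ : ℝ, (τ + (1/α) * ∫ x, max (x - τ) 0 ∂μ)
      = v + (1/α) * ∫ x, max (x - v) 0 ∂μ := by
  refine ciInf_eq_of_forall_ge_of_forall_gt_exists_lt (fun τ => ?_) fun w hw => ⟨v, hw⟩
  calc v + (1/α) * ∫ x, max (x - v) 0 ∂μ
      ≤ v + (1/α) * (∫ x, max (x - τ) 0 ∂μ + α * (τ - v)) := by
        gcongr
        exact integral_max_sub_le_add_of_measureReal hμ hIoi hIci τ
    _ = τ + (1/α) * ∫ x, max (x - τ) 0 ∂μ := by
        field_simp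
        ring

end ExpectedShortfall

theorem stmt11 {Ω : Type*} [MeasurableSpace Ω] (P : Measure Ω) [IsProbabilityMeasure P]
    (Y : Ω → ℝ) (hY : Integrable Y P) (α : ℝ) (hα : α ∈ Set.Ioo (0:ℝ) 1)
    (v : ℝ) (hv : v = sInf {z : ℝ | 1 - α ≤ (P {ω | Y ω ≤ z}).toReal}) :
    (⨅ τ : ℝ, (τ + (1/α) * ∫ ω, max (Y ω - τ) 0 ∂P))
      = v + (1/α) * ∫ ω, max (Y ω - v) 0 ∂P := by
  obtain ⟨hα0, hα1⟩ := hα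
  set μ := P.map Y
  have : IsProbabilityMeasure μ := Measure.isProbabilityMeasure_map hY.aemeasurable
  have hμ : Integrable id μ :=
    (integrable_map_measure aestronglyMeasurable_id hY.aemeasurable).2 hY
  have hcdf (z : ℝ) : (P {ω | Y ω ≤ z}).toReal = cdf μ z := by
    rw [cdf_eq_real, measureReal_def, Measure.map_apply_of_aemeasurable hY.aemeasurable
      measurableSet_Iic]
    rfl
  have hintegral (τ : ℝ) : ∫ ω, max (Y ω - τ) 0 ∂P = ∫ x, max (x - τ) 0 ∂μ :=
    (integral_map hY.aemeasurable
      (by fun_prop : Continuous fun x : ℝ => max (x - τ) 0).aestronglyMeasurable).symm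
  have hv_quantile : v = lowerQuantile μ (1 - α) := by
    simp only [hcdf] at hv
    exact hv
  simp only [hintegral]
  refine ciInf_add_integral_max_sub_eq hμ hα0 ?_ ?_ <;> rw [hv_quantile]
  · simpa using measureReal_Ioi_lowerQuantile_le μ (p := 1 - α) (by linarith)
  · simpa using le_measureReal_Ici_lowerQuantile μ (p := 1 - α) (by linarith)
end

section
/- Let γ < 1 and 0 < α < k/m. The conditional value-at-risk of Y_θ, expressed as CVaR_α(Y_θ) = (1/α)·∫_{1-α}^1 v_{1-τ}(Y_θ) dτ, admits the closed form CVaR_α(Y_θ) = (v_α(Y_θ) + g_s - γ·s)/(1-γ), where v_α(Y_θ) = s + (g_s/γ)·((mα/k)^(-γ) - 1) for γ ≠ 0 and s - g_s·log(mα/k) for γ = 0. -/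
/-! For `β < k/m` the level set `{z | 1 - β ≤ F_θ z}` is a half-line, found by inverting `φ_γ`:
`v_β = s + g · φ_γ⁻¹(mβ/k)` with `φ_γ⁻¹(u) = (u^(-γ) - 1)/γ` (resp. `-log u`). After `τ ↦ 1 - τ`
the CVaR is the mean of this quantile over `(0, α)`, and `∫₀ᵃ φ_γ⁻¹ = a (φ_γ⁻¹(a) + 1)/(1 - γ)`
(`γ < 1` makes `u^(-γ)` integrable at `0`), which is affine in `v_α`. -/

open MeasureTheory Set Filter Topology

noncomputable def phiInv (γ u : ℝ) : ℝ := if γ = 0 then -Real.log u else (u ^ (-γ) - 1) / γ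

noncomputable def tailQuantile (p γ s g β : ℝ) : ℝ := s + g * phiInv γ (β / p)

section phiInv

variable {γ u : ℝ}

lemma one_add_mul_phiInv (hγ : γ ≠ 0) : 1 + γ * phiInv γ u = u ^ (-γ) := by
  rw [phiInv, if_neg hγ]
  field_simp
  ring

lemma one_add_mul_phiInv_pos (hu : 0 < u) : 0 < 1 + γ * phiInv γ u := by
  rcases eq_or_ne γ 0 with rfl | hγ
  · simp
  · rw [one_add_mul_phiInv hγ]
    exact Real.rpow_pos_of_pos hu _

lemma phiInv_pos (hu₀ : 0 < u) (hu₁ : u < 1) : 0 < phiInv γ u := by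
  rcases lt_trichotomy γ 0 with hγ | rfl | hγ
  · rw [phiInv, if_neg hγ.ne]
    exact div_pos_of_neg_of_neg
      (by linarith [Real.rpow_lt_one hu₀.le hu₁ (neg_pos.2 hγ)]) hγ
  · simpa [phiInv] using Real.log_neg hu₀ hu₁
  · rw [phiInv, if_neg hγ.ne']
    exact div_pos
      (by linarith [Real.one_lt_rpow_of_pos_of_lt_one_of_neg hu₀ hu₁ (neg_neg_of_pos hγ)]) hγ

lemma phi_phiInv (hu : 0 < u) : phi γ (phiInv γ u) = u := by
  rcases eq_or_ne γ 0 with rfl | hγ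
  · simp [phi, phiInv, Real.exp_log hu]
  · rw [phi, if_neg hγ, one_add_mul_phiInv hγ, ← Real.rpow_mul hu.le,
      show -γ * (-1 / γ) = 1 by field_simp, Real.rpow_one]

lemma phi_le_iff_phiInv_le {x : ℝ} (hx : 0 < 1 + γ * x) (hu : 0 < u) :
    phi γ x ≤ u ↔ phiInv γ u ≤ x := by
  have hu' := one_add_mul_phiInv_pos (γ := γ) hu
  rcases lt_trichotomy γ 0 with hγ | rfl | hγ
  · conv_lhs => rw [← phi_phiInv (γ := γ) hu]
    simp only [phi, if_neg hγ.ne]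
    rw [Real.rpow_le_rpow_iff hx.le hu'.le (div_pos_of_neg_of_neg (by norm_num) hγ)]
    constructor <;> intro h <;> nlinarith
  · simp [phi, phiInv, ← Real.le_log_iff_exp_le hu, neg_le]
  · conv_lhs => rw [← phi_phiInv (γ := γ) hu]
    simp only [phi, if_neg hγ.ne']
    rw [Real.rpow_le_rpow_iff_of_neg hx hu' (div_neg_of_neg_of_pos (by norm_num) hγ)]
    constructor <;> intro h <;> nlinarith

end phiInv

lemma integral_phiInv {γ a : ℝ} (hγ : γ < 1) (ha : 0 ≤ a) :
    ∫ u in (0 : ℝ)..a, phiInv γ u = a * (phiInv γ a + 1) / (1 - γ) := by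
  rcases eq_or_ne γ 0 with rfl | hγ₀
  · simp only [phiInv, ↓reduceIte, intervalIntegral.integral_neg, integral_log, Real.log_zero,
      mul_zero, sub_zero, add_zero, div_one]
    ring
  · have h1 : -γ + 1 ≠ 0 := by linarith
    have h2 : 1 - γ ≠ 0 := by linarith
    simp only [phiInv, if_neg hγ₀]
    rw [intervalIntegral.integral_div, intervalIntegral.integral_sub
      (intervalIntegral.intervalIntegrable_rpow' (by linarith)) intervalIntegrable_const,
      integral_rpow (Or.inl (by linarith)), Real.zero_rpow h1, Real.rpow_add' ha h1, Real.rpow_one]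
    simp only [sub_zero, intervalIntegral.integral_const, smul_eq_mul, mul_one]
    field_simp
    ring

lemma intervalIntegrable_phiInv {γ a b : ℝ} (hγ : γ < 1) :
    IntervalIntegrable (fun u => phiInv γ u) volume a b := by
  rcases eq_or_ne γ 0 with rfl | hγ₀
  · simp only [phiInv, if_pos]
    exact intervalIntegral.intervalIntegrable_log'.neg
  · simp only [phiInv, if_neg hγ₀]
    exact ((intervalIntegral.intervalIntegrable_rpow' (by linarith)).sub
      intervalIntegrable_const).div_const γ

lemma integral_tailQuantile {p γ s g α : ℝ} (hp : 0 < p) (hγ : γ < 1) (hα : 0 ≤ α) :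
    ∫ β in (0 : ℝ)..α, tailQuantile p γ s g β
      = α * (tailQuantile p γ s g α + g - γ * s) / (1 - γ) := by
  have h1 : 1 - γ ≠ 0 := by linarith
  simp only [tailQuantile]
  rw [intervalIntegral.integral_comp_div (fun u => s + g * phiInv γ u) hp.ne',
    intervalIntegral.integral_add intervalIntegrable_const
      ((intervalIntegrable_phiInv hγ).const_mul g),
    intervalIntegral.integral_const_mul, zero_div, integral_phiInv hγ (div_nonneg hα hp.le),
    intervalIntegral.integral_const]
  simp only [smul_eq_mul, sub_zero]
  field_simp
  ring

lemma natCast_div_mem_Ioo {k m : ℕ} (hk : 0 < k) (hkm : k < m) : (k : ℝ) / m ∈ Ioo 0 1 :=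
  have hm : (0 : ℝ) < m := by exact_mod_cast hk.trans hkm
  ⟨div_pos (by exact_mod_cast hk) hm, (div_lt_one hm).2 (by exact_mod_cast hkm)⟩

lemma setOf_le_Ftheta_eq_Ici {k m : ℕ} {γ s g β : ℝ} (hk : 0 < k) (hkm : k < m) (hg : 0 < g)
    (hβ₀ : 0 < β) (hβ : β < k / m) :
    {z | 1 - β ≤ Ftheta k m γ s g z} = Ici (tailQuantile (k / m) γ s g β) := by
  obtain ⟨hp, hp₁⟩ := natCast_div_mem_Ioo hk hkm
  have hu : 0 < β / (k / m) := div_pos hβ₀ hp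
  have hq := phiInv_pos (γ := γ) hu ((div_lt_one hp).2 hβ)
  have hq' := one_add_mul_phiInv_pos (γ := γ) hu
  ext z
  simp only [mem_ofPred_eq, mem_Ici, Ftheta, tailQuantile]
  split_ifs with hzs hz
  · constructor <;> intro <;> nlinarith [mul_pos hg hq]
  · have : g * phiInv γ (β / (k / m)) < -(g / γ) := by
      have : phiInv γ (β / (k / m)) < -1 / γ := by rw [lt_div_iff_of_neg hz.1]; linarith
      calc g * phiInv γ (β / (k / m)) < g * (-1 / γ) := by gcongr
        _ = -(g / γ) := by ring
    constructor <;> intro <;> linarith [hz.2]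
  · have hx : 0 < 1 + γ * ((z - s) / g) := by
      rcases le_or_gt 0 γ with hγ | hγ
      · nlinarith [mul_nonneg hγ (div_nonneg (sub_nonneg.2 (not_lt.1 hzs)) hg.le)]
      · have : z - s < -g / γ := by linarith [lt_of_not_ge fun h => hz ⟨hγ, h⟩, neg_div γ g]
        rw [lt_div_iff_of_neg hγ] at this
        have : -1 < γ * ((z - s) / g) := by rw [mul_div_assoc', lt_div_iff₀ hg]; linarith
        linarith
    rw [sub_le_sub_iff_left, mul_comm, ← le_div_iff₀ hp, phi_le_iff_phiInv_le hx hu,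
      le_div_iff₀ hg]
    constructor <;> intro <;> linarith

theorem stmt13 (k m : ℕ) (γ s g α : ℝ) (hk : 0 < k) (hkm : k < m) (hγ : γ < 1)
    (hg : 0 < g) (hα : 0 < α) (hαkm : α < (k : ℝ) / m)
    (v : ℝ → ℝ) (hv : ∀ β ∈ Set.Ioo (0:ℝ) 1, v β = sInf {z : ℝ | 1 - β ≤ Ftheta k m γ s g z}) :
    (1/α) * ∫ τ in Set.Ioc (1 - α) 1, v (1 - τ)
      = (v α + g - γ * s) / (1 - γ) ∧
    v α = (if γ = 0 then s - g * Real.log (m * α / k)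
           else s + (g / γ) * ((m * α / k) ^ (-γ) - 1)) := by
  obtain ⟨hp, hp₁⟩ := natCast_div_mem_Ioo hk hkm
  have hv_eq : ∀ β ∈ Ioc 0 α, v β = tailQuantile (k / m) γ s g β := fun β hβ => by
    have hβk : β < k / m := hβ.2.trans_lt hαkm
    rw [hv β ⟨hβ.1, hβk.trans hp₁⟩, setOf_le_Ftheta_eq_Ici hk hkm hg hβ.1 hβk, csInf_Ici]
  have hvα := hv_eq α ⟨hα, le_rfl⟩
  refine ⟨?_, ?_⟩
  · calc (1 / α) * ∫ τ in Ioc (1 - α) 1, v (1 - τ)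
        = (1 / α) * ∫ β in (0 : ℝ)..α, v β := by
          rw [← intervalIntegral.integral_of_le (by linarith),
            intervalIntegral.integral_comp_sub_left, sub_self, sub_sub_cancel]
      _ = (1 / α) * ∫ β in (0 : ℝ)..α, tailQuantile (k / m) γ s g β := by
          rw [intervalIntegral.integral_congr_ae (ae_of_all _ fun β hβ => ?_)]
          rw [uIoc_of_le hα.le] at hβ
          exact hv_eq β hβ
      _ = (v α + g - γ * s) / (1 - γ) := by
          rw [integral_tailQuantile hp hγ hα.le, hvα]
          field_simp
  · rw [hvα, tailQuantile, phiInv, div_div_eq_mul_div, mul_comm α]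
    split_ifs <;> ring
end
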